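/- arXiv:1711.05136 — 3 statements merged into one kernel-verified Lean document; each statement's English description precedes it below -/
import Mathlib

section
/- Let Θ be a measurable space, let 𝒳 be a finite nonempty set, and let C : Θ → 𝒳 → Prop be such that {θ : C θ c} is measurable for each c ∈ 𝒳 and such that for every θ ∈ Θ the set {c ∈ 𝒳 : C θ c} is nonempty. Let π be a finite measure on Θ with L(c) := π({θ : C θ c}) > 0 for every c ∈ 𝒳, and for c ∈ 𝒳 let ν_c be the probability measure ν_c(A) = π(A ∩ {θ : C θ c}) / L(c). Let κ : 𝒳 → Kernel(Θ, Θ) be any family of Markov kernels such that ν_c is invariant under κ(c) for every c ∈ 𝒳 (i.e., ν_c.bind(κ c) = ν_c). Define the Markov kernel T_c from Θ to 𝒳 by T_c(θ) = the uniform distribution on {c ∈ 𝒳 : C θ c}, and define the compound Markov kernel T on Θ × 𝒳 by: given (θ', c'), first sample θ according to κ(c')(θ'), then sample c according to T_c(θ), and output (θ, c). Then the probability measure p* on Θ × 𝒳 defined by p*(A × {c}) = π(A ∩ {θ : C θ c}) / (Σ_{c' ∈ 𝒳} L(c')) for measurable A ⊆ Θ and c ∈ 𝒳 is invariant under T, i.e.,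 p*.bind(T) = p*. -/
open MeasureTheory ProbabilityTheory Finset
open scoped ENNReal

/-! Under `pstar` the slice over `c` is, up to normalization, `π` restricted to `{θ | C θ c}`,
a multiple of `ν c` and hence invariant under `κ c`: the parameter step leaves every slice
unchanged. The `Θ`-marginal `∑ c, π.restrict {θ | C θ c}` has density `n` with respect to `π`,
where `n θ` counts the constraints compatible with `θ`, and resampling `c` uniformly among them splits the mass
`n θ • π(dθ)` back into one copy of `π(dθ)` per compatible constraint, which is `pstar` again. -/

namespace MeasureTheory.Measure

variable {Θ 𝒳 β : Type*} [MeasurableSpace Θ] [MeasurableSpace 𝒳] [MeasurableSpace β]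

lemma ext_of_prod_singleton [Countable 𝒳] [MeasurableSingletonClass 𝒳]
    {μ ν : Measure (Θ × 𝒳)}
    (h : ∀ (A : Set Θ) (c : 𝒳), MeasurableSet A → μ (A ×ˢ {c}) = ν (A ×ˢ {c})) :
    μ = ν := by
  ext S hS
  have hslice : ∀ c : 𝒳, MeasurableSet ((·, c) ⁻¹' S) := fun c => measurable_prodMk_right hS
  have hS_eq : S = ⋃ c : 𝒳, ((·, c) ⁻¹' S) ×ˢ {c} := by
    ext ⟨θ, c⟩
    simp
  have hdisj : Pairwise (Function.onFun Disjoint fun c : 𝒳 => ((·, c) ⁻¹' S) ×ˢ ({c} : Set 𝒳)) :=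
    fun c c' hne => Set.disjoint_prod.2 (Or.inr (Set.disjoint_singleton.2 hne))
  have hmeas : ∀ c : 𝒳, MeasurableSet (((·, c) ⁻¹' S) ×ˢ ({c} : Set 𝒳)) :=
    fun c => (hslice c).prod (measurableSet_singleton c)
  rw [hS_eq, measure_iUnion hdisj hmeas, measure_iUnion hdisj hmeas]
  exact tsum_congr fun c => h _ c (hslice c)

lemma sum_map_prodMk_apply_prod_singleton [Countable 𝒳] [MeasurableSingletonClass 𝒳]
    (μ : 𝒳 → Measure Θ) {A : Set Θ} (hA : MeasurableSet A) (c : 𝒳) :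
    (Measure.sum fun c' => (μ c').map (·, c')) (A ×ˢ {c}) = μ c A := by
  classical
  rw [Measure.sum_apply _ (hA.prod (measurableSet_singleton c))]
  simp_rw [Measure.map_apply measurable_prodMk_right (hA.prod (measurableSet_singleton c)),
    Set.mk_preimage_prod_left_eq_if, Set.mem_singleton_iff]
  rw [tsum_eq_single c fun c' hc' => by rw [if_neg hc', measure_empty], if_pos rfl]

lemma sum_map_prodMk_bind_eq_of_bind_eq_self [Countable 𝒳] [MeasurableSingletonClass 𝒳]
    {μ : 𝒳 → Measure Θ} {κ : 𝒳 → Kernel Θ Θ} (hκ : ∀ c, (μ c).bind (κ c) = μ c)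
    {g : Θ → Measure β} (hg : Measurable g) :
    (Measure.sum fun c => (μ c).map (·, c)).bind (fun q => (κ q.2 q.1).bind g) =
      (Measure.sum μ).bind g := by
  have hT : Measurable fun q : Θ × 𝒳 => (κ q.2 q.1).bind g :=
    measurable_from_prod_countable_left fun c => (Measure.measurable_bind' hg).comp (κ c).measurable
  rw [Measure.bind_sum _ _ hT.aemeasurable, Measure.bind_sum _ _ hg.aemeasurable]
  congr 1
  funext c
  rw [Measure.bind, Measure.map_map hT measurable_prodMk_right, ← Measure.bind, Function.comp_def,
    ← Measure.bind_bind (κ c).measurable.aemeasurable hg.aemeasurable, hκ]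

end MeasureTheory.Measure

section

variable {Θ 𝒳 : Type*} [MeasurableSpace 𝒳] (C : Θ → 𝒳 → Prop) [∀ θ c, Decidable (C θ c)]

noncomputable def uniformCompatible [Fintype 𝒳] (θ : Θ) : Measure 𝒳 :=
  ((univ.filter (C θ ·)).card : ℝ≥0∞)⁻¹ • ∑ c ∈ univ.filter (C θ ·), Measure.dirac c

variable [Fintype 𝒳] [MeasurableSingletonClass 𝒳]

lemma uniformCompatible_apply (θ : Θ) (t : Set 𝒳) :
    uniformCompatible C θ t =
      (∑ c, if C θ c then 1 else 0)⁻¹ * ∑ c, if C θ c then t.indicator 1 c else 0 := by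
  rw [uniformCompatible, Measure.smul_apply, Measure.finsetSum_apply, smul_eq_mul, sum_filter,
    sum_boole]
  simp_rw [Measure.dirac_apply]

lemma sum_ite_uniformCompatible_apply (θ : Θ) (t : Set 𝒳) :
    ∑ c, (if C θ c then uniformCompatible C θ t else 0) =
      ∑ c, if C θ c then t.indicator 1 c else 0 := by
  rw [uniformCompatible_apply, ← sum_filter, sum_const, sum_boole, nsmul_eq_mul]
  rcases (univ.filter (C θ ·)).eq_empty_or_nonempty with hempty | hne
  · have hC : ∀ c, ¬C θ c := by simpa [filter_eq_empty_iff] using hempty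
    simp [hC]
  · rw [← mul_assoc, ENNReal.mul_inv_cancel (Nat.cast_ne_zero.2 hne.card_pos.ne')
      (ENNReal.natCast_ne_top _), one_mul]

variable [MeasurableSpace Θ]

lemma measurable_uniformCompatible_map (hC : ∀ c, MeasurableSet {θ | C θ c}) :
    Measurable fun θ => (uniformCompatible C θ).map (θ, ·) := by
  refine Measure.measurable_of_measurable_coe _ fun S hS => ?_
  simp_rw [Measure.map_apply measurable_prodMk_left hS, uniformCompatible_apply]
  refine Measurable.mul (Finset.measurable_sum _ fun c _ => ?_).inv
    (Finset.measurable_sum _ fun c _ => ?_)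
  · exact Measurable.ite (hC c) measurable_const measurable_const
  · exact Measurable.ite (hC c) ((measurable_one.indicator hS).comp measurable_prodMk_right)
      measurable_const

lemma sum_restrict_bind_uniformCompatible_map (hC : ∀ c, MeasurableSet {θ | C θ c})
    (π : Measure Θ) :
    (Measure.sum fun c => π.restrict {θ | C θ c}).bind
        (fun θ => (uniformCompatible C θ).map (θ, ·)) =
      Measure.sum fun c => (π.restrict {θ | C θ c}).map (·, c) := by
  ext S hS
  have hg := measurable_uniformCompatible_map C hC
  have hgS : Measurable fun θ => (uniformCompatible C θ).map (θ, ·) S :=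
    (Measure.measurable_coe hS).comp hg
  have hslice : ∀ c : 𝒳, MeasurableSet ((·, c) ⁻¹' S) := fun c => measurable_prodMk_right hS
  calc _ = ∑ c, ∫⁻ θ, {θ | C θ c}.indicator
          (fun θ => (uniformCompatible C θ).map (θ, ·) S) θ ∂π := by
        simp_rw [Measure.bind_apply hS hg.aemeasurable, lintegral_sum_measure, tsum_fintype,
          lintegral_indicator (hC _)]
    _ = ∫⁻ θ, ∑ c, {θ | C θ c}.indicator (fun θ => ((·, c) ⁻¹' S).indicator 1 θ) θ ∂π := by
        rw [← lintegral_finsetSum _ fun c _ => hgS.indicator (hC c)]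
        refine lintegral_congr fun θ => ?_
        have h := sum_ite_uniformCompatible_apply C θ (Prod.mk θ ⁻¹' S)
        simp only [Set.indicator_apply, Set.mem_ofPred_eq] at h ⊢
        rwa [Measure.map_apply measurable_prodMk_left hS]
    _ = _ := by
        rw [lintegral_finsetSum _ fun c _ => (measurable_one.indicator (hslice c)).indicator (hC c),
          Measure.sum_apply _ hS, tsum_fintype]
        refine sum_congr rfl fun c _ => ?_
        rw [lintegral_indicator (hC c), lintegral_indicator_one (hslice c),
          Measure.map_apply measurable_prodMk_right hS]

end

theorem deepR_compound_operator_invariance_general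
    {Θ 𝒳 : Type*} [MeasurableSpace Θ] [MeasurableSpace 𝒳] [MeasurableSingletonClass 𝒳]
    [Fintype 𝒳]
    (C : Θ → 𝒳 → Prop) [∀ θ c, Decidable (C θ c)]
    (hCmeas : ∀ c, MeasurableSet {θ | C θ c})
    (π : Measure Θ) [IsFiniteMeasure π]
    (L : 𝒳 → ℝ≥0∞) (hL : ∀ c, L c = π {θ | C θ c}) (hLpos : ∀ c, 0 < L c)
    (ν : 𝒳 → Measure Θ) (hν : ∀ c, ν c = (L c)⁻¹ • π.restrict {θ | C θ c})
    (κ : 𝒳 → Kernel Θ Θ)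
    (hinv : ∀ c, (ν c).bind (κ c) = ν c)
    (Tc : Θ → Measure 𝒳)
    (hTc : ∀ θ, Tc θ = ((Finset.univ.filter (fun c => C θ c)).card : ℝ≥0∞)⁻¹ •
        ∑ c ∈ Finset.univ.filter (fun c => C θ c), Measure.dirac c)
    (T : Θ × 𝒳 → Measure (Θ × 𝒳))
    (hT : ∀ q : Θ × 𝒳, T q = (κ q.2 q.1).bind (fun θ => (Tc θ).map (fun c => (θ, c))))
    (pstar : Measure (Θ × 𝒳))
    (hpstar : ∀ (A : Set Θ) (c : 𝒳), MeasurableSet A →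
        pstar (A ×ˢ ({c} : Set 𝒳)) = π (A ∩ {θ | C θ c}) / ∑ c', L c') :
    pstar.bind T = pstar := by
  obtain rfl : Tc = uniformCompatible C := funext hTc
  obtain rfl : T = fun q => (κ q.2 q.1).bind fun θ => (uniformCompatible C θ).map (θ, ·) :=
    funext hT
  have hslice : ∀ c, (π.restrict {θ | C θ c}).bind (κ c) = π.restrict {θ | C θ c} := by
    intro c
    have hL_ne_top : L c ≠ ∞ := hL c ▸ measure_ne_top π _
    have hrestrict : π.restrict {θ | C θ c} = L c • ν c := by
      rw [hν, smul_smul, ENNReal.mul_inv_cancel (hLpos c).ne' hL_ne_top, one_smul]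
    rw [hrestrict, Measure.bind_smul, hinv]
  have hpstar_eq : pstar = (∑ c, L c)⁻¹ •
      Measure.sum fun c => (π.restrict {θ | C θ c}).map (·, c) := by
    refine Measure.ext_of_prod_singleton fun A c hA => ?_
    rw [hpstar A c hA, Measure.smul_apply, Measure.sum_map_prodMk_apply_prod_singleton _ hA,
      Measure.restrict_apply hA, smul_eq_mul, ENNReal.div_eq_inv_mul]
  rw [hpstar_eq, Measure.bind_smul,
    Measure.sum_map_prodMk_bind_eq_of_bind_eq_self hslice
      (measurable_uniformCompatible_map C hCmeas),
    sum_restrict_bind_uniformCompatible_map C hCmeas]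

/-- **Invariance of the joint stationary distribution of DEEP R (compound operator).**
`Θ` is the parameter space, `𝒳` the finite nonempty set of connectivity constraints,
`C θ c` the compatibility predicate, `π` the (unnormalized tempered posterior) finite
measure, `L c = π {θ | C θ c}`, `ν c` the conditioned posterior
`ν c = (L c)⁻¹ • π.restrict {θ | C θ c}`, and `κ c` a Markov kernel leaving `ν c`
invariant.  `Tc θ` is the uniform distribution on the constraints compatible with `θ`,
and the compound operator `T` first evolves `θ` by `κ c'` and then resamples `c` from
`Tc θ`.  The joint measure `pstar`, characterized on rectangles by
`pstar (A ×ˢ {c}) = π (A ∩ {θ | C θ c}) / ∑ c', L c'`, is invariant under `T`. -/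
theorem deepR_compound_operator_invariance
    {Θ 𝒳 : Type*} [MeasurableSpace Θ] [MeasurableSpace 𝒳] [MeasurableSingletonClass 𝒳]
    [Fintype 𝒳] [Nonempty 𝒳]
    (C : Θ → 𝒳 → Prop) [∀ θ c, Decidable (C θ c)]
    (hCmeas : ∀ c, MeasurableSet {θ | C θ c})
    (hCne : ∀ θ, ∃ c, C θ c)
    (π : Measure Θ) [IsFiniteMeasure π]
    (L : 𝒳 → ℝ≥0∞) (hL : ∀ c, L c = π {θ | C θ c}) (hLpos : ∀ c, 0 < L c)
    (ν : 𝒳 → Measure Θ) (hν : ∀ c, ν c = (L c)⁻¹ • π.restrict {θ | C θ c})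
    (κ : 𝒳 → Kernel Θ Θ) [∀ c, IsMarkovKernel (κ c)]
    (hinv : ∀ c, (ν c).bind (κ c) = ν c)
    (Tc : Θ → Measure 𝒳)
    (hTc : ∀ θ, Tc θ = ((Finset.univ.filter (fun c => C θ c)).card : ℝ≥0∞)⁻¹ •
        ∑ c ∈ Finset.univ.filter (fun c => C θ c), Measure.dirac c)
    (T : Θ × 𝒳 → Measure (Θ × 𝒳))
    (hT : ∀ q : Θ × 𝒳, T q = (κ q.2 q.1).bind (fun θ => (Tc θ).map (fun c => (θ, c))))
    (pstar : Measure (Θ × 𝒳)) [IsProbabilityMeasure pstar]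
    (hpstar : ∀ (A : Set Θ) (c : 𝒳), MeasurableSet A →
        pstar (A ×ˢ ({c} : Set 𝒳)) = π (A ∩ {θ | C θ c}) / ∑ c', L c') :
    pstar.bind T = pstar :=
  deepR_compound_operator_invariance_general C hCmeas π L hL hLpos ν hν κ hinv Tc hTc T hT pstar
    hpstar
end

section
/- Let Θ be a measurable space, let 𝒳 be a finite nonempty set, and let C : Θ → 𝒳 → Prop be such that {θ : C θ c} is measurable for each c ∈ 𝒳 and such that for every θ ∈ Θ the set {c ∈ 𝒳 : C θ c} is nonempty. Let π be a finite measure on Θ with L(c) := π({θ : C θ c}) > 0 for every c ∈ 𝒳, and define the probability measure p* on Θ × 𝒳 by p*(A × {c}) = π(A ∩ {θ : C θ c}) / (Σ_{c' ∈ 𝒳} L(c')) for measurable A ⊆ Θ and c ∈ 𝒳. Define the Markov kernel T₂ on Θ × 𝒳 by T₂(θ, c') = δ_θ ⊗ (uniform distribution on {c ∈ 𝒳 : C θ c}) (i.e., the parameter component is kept fixed and the constraint component is resampled uniformly among constraints compatible with θ). Then p* is invariant under T₂, i.e., p*.bind(T₂) = p*. -/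
open MeasureTheory
open scoped ENNReal

/-! Slice by slice, `pstar` restricted to `Θ × {c}` is `Z⁻¹ • π` restricted to `{θ | C θ c}`
(with `Z = ∑ c, L c`), so integrating `g` against `pstar` gives
`Z⁻¹ * ∫ θ, ∑ {c compatible with θ}, g (θ, c) ∂π`. The kernel `T₂ (θ, c)` depends only on `θ`
and is the average over the compatible constraints, so summing it over those constraints gives
back `∑ {c compatible with θ}, 1_s (θ, c)`: the integrand of `pstar s` itself. -/

open Finset in
theorem ENNReal.sum_inv_card_mul_sum {ι : Type*} (s : Finset ι) (f : ι → ℝ≥0∞) :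
    ∑ _i ∈ s, (#s : ℝ≥0∞)⁻¹ * ∑ j ∈ s, f j = ∑ j ∈ s, f j := by
  rcases s.eq_empty_or_nonempty with rfl | hs
  · simp
  rw [sum_const, nsmul_eq_mul,
    ENNReal.mul_inv_cancel_left (by simpa using hs.ne_empty) (ENNReal.natCast_ne_top _)]

namespace MeasureTheory.Measure

variable {Θ 𝒳 : Type*} [MeasurableSpace Θ] [MeasurableSpace 𝒳]

theorem dirac_prod_smul_sum_dirac_apply (θ : Θ) (a : ℝ≥0∞) (F : Finset 𝒳)
    {s : Set (Θ × 𝒳)} (hs : MeasurableSet s) :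
    ((dirac θ).prod (a • ∑ c ∈ F, dirac c)) s = a * ∑ c ∈ F, s.indicator 1 (θ, c) := by
  rw [dirac_prod, map_apply measurable_prodMk_left hs, smul_apply, smul_eq_mul,
    finsetSum_apply]
  simp only [dirac_apply' _ (measurable_prodMk_left hs)]
  rfl

variable [MeasurableSingletonClass 𝒳] [Fintype 𝒳]

theorem apply_eq_sum_prod_singleton (μ : Measure (Θ × 𝒳)) (s : Set (Θ × 𝒳)) :
    μ s = ∑ c, μ (((fun θ => (θ, c)) ⁻¹' s) ×ˢ {c}) := by
  have hslice (c : 𝒳) : ((fun θ => (θ, c)) ⁻¹' s) ×ˢ {c} = Prod.snd ⁻¹' {c} ∩ s := by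
    ext ⟨θ, c'⟩
    simp only [Set.mem_prod, Set.mem_preimage, Set.mem_singleton_iff, Set.mem_inter_iff]
    exact ⟨fun ⟨h, e⟩ => ⟨e, e ▸ h⟩, fun ⟨e, h⟩ => ⟨e ▸ h, e⟩⟩
  simp_rw [hslice, ← restrict_apply (measurable_snd (measurableSet_singleton _)),
    sum_measure_preimage_singleton _ fun c _ => measurable_snd (measurableSet_singleton c),
    Finset.coe_univ, Set.preimage_univ, restrict_apply_univ]

theorem eq_sum_map_prodMk_of_apply_prod_singleton {μ : Measure (Θ × 𝒳)} {ρ : 𝒳 → Measure Θ}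
    (h : ∀ A c, MeasurableSet A → μ (A ×ˢ {c}) = ρ c A) :
    μ = ∑ c, (ρ c).map (fun θ => (θ, c)) := by
  ext s hs
  rw [apply_eq_sum_prod_singleton μ s, finsetSum_apply]
  refine Finset.sum_congr rfl fun c _ => ?_
  rw [h _ c (measurable_prodMk_right hs), map_apply measurable_prodMk_right hs]

theorem lintegral_eq_sum_of_apply_prod_singleton {μ : Measure (Θ × 𝒳)} {ρ : 𝒳 → Measure Θ}
    (h : ∀ A c, MeasurableSet A → μ (A ×ˢ {c}) = ρ c A) (g : Θ × 𝒳 → ℝ≥0∞) :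
    ∫⁻ q, g q ∂μ = ∑ c, ∫⁻ θ, g (θ, c) ∂ρ c := by
  rw [eq_sum_map_prodMk_of_apply_prod_singleton h, lintegral_finsetSum_measure]
  exact Finset.sum_congr rfl fun c _ => (measurableEmbedding_prod_mk_right c).lintegral_map g

end MeasureTheory.Measure

section Compatible

variable {Θ 𝒳 : Type*} [MeasurableSpace Θ] [Fintype 𝒳] (C : Θ → 𝒳 → Prop)
  [∀ θ c, Decidable (C θ c)]

theorem measurable_sum_filter (hC : ∀ c, MeasurableSet {θ | C θ c}) {f : 𝒳 → Θ → ℝ≥0∞}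
    (hf : ∀ c, Measurable (f c)) :
    Measurable fun θ => ∑ c ∈ Finset.univ.filter (fun c => C θ c), f c θ := by
  simp_rw [Finset.sum_filter]
  exact Finset.measurable_sum _ fun c _ => Measurable.ite (hC c) (hf c) measurable_const

theorem measurable_card_filter (hC : ∀ c, MeasurableSet {θ | C θ c}) :
    Measurable fun θ => ((Finset.univ.filter (fun c => C θ c)).card : ℝ≥0∞) := by
  simp_rw [Finset.card_eq_sum_ones, Nat.cast_sum, Nat.cast_one]
  exact measurable_sum_filter C hC fun _ => measurable_const

theorem sum_setLIntegral_eq_lintegral_sum_filter (π : Measure Θ)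
    (hC : ∀ c, MeasurableSet {θ | C θ c}) {f : 𝒳 → Θ → ℝ≥0∞} (hf : ∀ c, Measurable (f c)) :
    ∑ c, ∫⁻ θ in {θ | C θ c}, f c θ ∂π =
      ∫⁻ θ, ∑ c ∈ Finset.univ.filter (fun c => C θ c), f c θ ∂π := by
  simp_rw [Finset.sum_filter]
  rw [lintegral_finsetSum _ fun c _ => (hf c).ite (hC c) measurable_const]
  refine Finset.sum_congr rfl fun c _ => ?_
  rw [← lintegral_indicator (hC c)]
  simp only [Set.indicator_apply]
  rfl

theorem lintegral_eq_inv_mul_lintegral_sum_filter [MeasurableSpace 𝒳]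
    [MeasurableSingletonClass 𝒳] (hC : ∀ c, MeasurableSet {θ | C θ c}) {μ : Measure (Θ × 𝒳)}
    (π : Measure Θ) (Z : ℝ≥0∞)
    (hμ : ∀ A c, MeasurableSet A → μ (A ×ˢ {c}) = π (A ∩ {θ | C θ c}) / Z)
    (g : Θ × 𝒳 → ℝ≥0∞) (hg : Measurable g) :
    ∫⁻ q, g q ∂μ = Z⁻¹ * ∫⁻ θ, ∑ c ∈ Finset.univ.filter (fun c => C θ c), g (θ, c) ∂π := by
  have hρ : ∀ A c, MeasurableSet A → μ (A ×ˢ {c}) = (Z⁻¹ • π.restrict {θ | C θ c}) A :=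
    fun A c hA => by
      rw [hμ A c hA, Measure.smul_apply, Measure.restrict_apply hA, smul_eq_mul,
        ENNReal.div_eq_inv_mul]
  simp_rw [Measure.lintegral_eq_sum_of_apply_prod_singleton hρ, lintegral_smul_measure,
    smul_eq_mul, ← Finset.mul_sum]
  rw [sum_setLIntegral_eq_lintegral_sum_filter C π hC (f := fun c θ => g (θ, c))
    fun c => hg.comp measurable_prodMk_right]

end Compatible

theorem deepR_rewiring_operator_invariance_general
    {Θ 𝒳 : Type*} [MeasurableSpace Θ] [MeasurableSpace 𝒳] [MeasurableSingletonClass 𝒳]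
    [Fintype 𝒳]
    (C : Θ → 𝒳 → Prop) [∀ θ c, Decidable (C θ c)]
    (hCmeas : ∀ c, MeasurableSet {θ | C θ c})
    (π : Measure Θ)
    (L : 𝒳 → ℝ≥0∞)
    (pstar : Measure (Θ × 𝒳))
    (hpstar : ∀ (A : Set Θ) (c : 𝒳), MeasurableSet A →
        pstar (A ×ˢ ({c} : Set 𝒳)) = π (A ∩ {θ | C θ c}) / ∑ c', L c')
    (T₂ : Θ × 𝒳 → Measure (Θ × 𝒳))
    (hT₂ : ∀ q : Θ × 𝒳, T₂ q = (Measure.dirac q.1).prod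
        (((Finset.univ.filter (fun c => C q.1 c)).card : ℝ≥0∞)⁻¹ •
          ∑ c ∈ Finset.univ.filter (fun c => C q.1 c), Measure.dirac c)) :
    pstar.bind T₂ = pstar := by
  have hT₂_apply (q : Θ × 𝒳) {s : Set (Θ × 𝒳)} (hs : MeasurableSet s) :
      T₂ q s = ((Finset.univ.filter (fun c => C q.1 c)).card : ℝ≥0∞)⁻¹ *
        ∑ c ∈ Finset.univ.filter (fun c => C q.1 c), s.indicator 1 (q.1, c) := by
    rw [hT₂, Measure.dirac_prod_smul_sum_dirac_apply _ _ _ hs]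
  have hT₂_meas : Measurable T₂ := Measure.measurable_of_measurable_coe _ fun s hs => by
    simp_rw [hT₂_apply _ hs]
    exact ((measurable_card_filter C hCmeas).comp measurable_fst).inv.mul <|
      (measurable_sum_filter C hCmeas fun c =>
        (measurable_one.indicator hs).comp measurable_prodMk_right).comp measurable_fst
  ext s hs
  rw [Measure.bind_apply hs hT₂_meas.aemeasurable, ← lintegral_indicator_one (μ := pstar) hs,
    lintegral_eq_inv_mul_lintegral_sum_filter C hCmeas π _ hpstar
      (fun q => T₂ q s) ((Measure.measurable_coe hs).comp hT₂_meas),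
    lintegral_eq_inv_mul_lintegral_sum_filter C hCmeas π _ hpstar _
      (measurable_one.indicator hs)]
  simp_rw [hT₂_apply _ hs, ENNReal.sum_inv_card_mul_sum]

/-- **Invariance of the joint stationary distribution under the rewiring operator.**
`Θ` is the parameter space, `𝒳` the finite nonempty set of connectivity constraints,
`C θ c` the compatibility predicate, `π` the (unnormalized tempered posterior) finite
measure with `L c = π {θ | C θ c} > 0`, and `pstar` the joint measure on `Θ × 𝒳`
characterized on rectangles by `pstar (A ×ˢ {c}) = π (A ∩ {θ | C θ c}) / ∑ c', L c'`.
The rewiring kernel `T₂ (θ, c') = δ_θ ⊗ (uniform on {c | C θ c})` keeps the parameter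
fixed and resamples the constraint uniformly among compatible ones; it leaves `pstar`
invariant. -/
theorem deepR_rewiring_operator_invariance
    {Θ 𝒳 : Type*} [MeasurableSpace Θ] [MeasurableSpace 𝒳] [MeasurableSingletonClass 𝒳]
    [Fintype 𝒳] [Nonempty 𝒳]
    (C : Θ → 𝒳 → Prop) [∀ θ c, Decidable (C θ c)]
    (hCmeas : ∀ c, MeasurableSet {θ | C θ c})
    (hCne : ∀ θ, ∃ c, C θ c)
    (π : Measure Θ) [IsFiniteMeasure π]
    (L : 𝒳 → ℝ≥0∞) (hL : ∀ c, L c = π {θ | C θ c}) (hLpos : ∀ c, 0 < L c)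
    (pstar : Measure (Θ × 𝒳)) [IsProbabilityMeasure pstar]
    (hpstar : ∀ (A : Set Θ) (c : 𝒳), MeasurableSet A →
        pstar (A ×ˢ ({c} : Set 𝒳)) = π (A ∩ {θ | C θ c}) / ∑ c', L c')
    (T₂ : Θ × 𝒳 → Measure (Θ × 𝒳))
    (hT₂ : ∀ q : Θ × 𝒳, T₂ q = (Measure.dirac q.1).prod
        (((Finset.univ.filter (fun c => C q.1 c)).card : ℝ≥0∞)⁻¹ •
          ∑ c ∈ Finset.univ.filter (fun c => C q.1 c), Measure.dirac c)) :
    pstar.bind T₂ = pstar :=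
  deepR_rewiring_operator_invariance_general C hCmeas π L pstar hpstar T₂ hT₂
end

section
/- Let Θ be a measurable space, let 𝒳 be a finite nonempty set, and let C : Θ → 𝒳 → Prop be such that {θ : C θ c} is measurable for each c ∈ 𝒳. Let π be a finite measure on Θ with L(c) := π({θ : C θ c}) > 0 for every c ∈ 𝒳, and for c ∈ 𝒳 let ν_c be the probability measure ν_c(A) = π(A ∩ {θ : C θ c}) / L(c). Let κ : 𝒳 → Kernel(Θ, Θ) be any family of Markov kernels such that ν_c is invariant under κ(c) for every c ∈ 𝒳. Define the probability measure p* on Θ × 𝒳 by p*(A × {c}) = π(A ∩ {θ : C θ c}) / (Σ_{c' ∈ 𝒳} L(c')), and define the Markov kernel T₁ on Θ × 𝒳 by T₁(θ', c') = (κ(c')(θ')) ⊗ δ_{c'} (i.e., the parameter component evolves under the kernel associated with the current constraint while the constraint component is kept fixed). Then p* is invariant under T₁, i.e., p*.bind(T₁) = p*. -/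
open MeasureTheory ProbabilityTheory
open scoped ENNReal

/-!
Split the joint measure along the constraint coordinate: `p*` is the sum over `c` of its
`Θ`-marginals on the fibres `Θ × {c}`, each pushed forward by `θ ↦ (θ, c)`. The update kernel
moves such a piece by `κ c` on the first coordinate and leaves `c` fixed, so it suffices that
every fibre marginal is `κ c`-invariant; for `p*` the fibre marginal over `c` is
`(∑ c', L c')⁻¹ • L c • ν c`, a multiple of the invariant measure `ν c`.
-/

namespace MeasureTheory.Measure

variable {α β γ : Type*} [MeasurableSpace α] [MeasurableSpace β] [MeasurableSpace γ]

theorem bind_map {m : Measure α} {f : α → β} {g : β → Measure γ}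
    (hf : Measurable f) (hg : Measurable g) : (m.map f).bind g = m.bind (g ∘ f) := by
  ext s hs
  rw [bind_apply hs hg.aemeasurable, bind_apply hs (hg.comp hf).aemeasurable]
  exact lintegral_map (measurable_coe hs |>.comp hg) hf

theorem map_bind {m : Measure α} {g : α → Measure β} {f : β → γ}
    (hg : Measurable g) (hf : Measurable f) :
    (m.bind g).map f = m.bind fun a => (g a).map f := by
  ext s hs
  have hmap : Measurable fun a => (g a).map f := (measurable_map f hf).comp hg
  rw [map_apply hf hs, bind_apply (hf hs) hg.aemeasurable, bind_apply hs hmap.aemeasurable]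
  simp only [map_apply hf hs]

noncomputable def fiberMarginal (μ : Measure (α × β)) (b : β) : Measure α :=
  (μ.restrict (Prod.snd ⁻¹' {b})).map Prod.fst

variable [MeasurableSingletonClass β]

theorem restrict_snd_preimage_singleton (μ : Measure (α × β)) (b : β) :
    μ.restrict (Prod.snd ⁻¹' {b}) = (μ.fiberMarginal b).map (fun a => (a, b)) := by
  have hfiber : MeasurableSet (Prod.snd ⁻¹' {b} : Set (α × β)) :=
    measurable_snd (measurableSet_singleton b)
  have hae : (fun q : α × β => (q.1, q.2)) =ᵐ[μ.restrict (Prod.snd ⁻¹' {b})]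
      fun q => (q.1, b) := by
    filter_upwards [ae_restrict_mem hfiber] with q hq
    exact Prod.ext rfl hq
  rw [fiberMarginal, map_map (by fun_prop) measurable_fst, Function.comp_def,
    ← map_congr hae, map_id']

theorem eq_sum_map_fiberMarginal [Countable β] (μ : Measure (α × β)) :
    μ = sum fun b => (μ.fiberMarginal b).map (fun a => (a, b)) := by
  have hcover : (⋃ b : β, Prod.snd ⁻¹' {b} : Set (α × β)) = Set.univ := by
    ext q; simp
  have hdisj : Pairwise fun b b' : β =>
      Disjoint (Prod.snd ⁻¹' {b} : Set (α × β)) (Prod.snd ⁻¹' {b'}) :=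
    fun b b' hbb' => (Set.disjoint_singleton.mpr hbb').preimage Prod.snd
  conv_lhs => rw [← restrict_univ (μ := μ), ← hcover,
    restrict_iUnion hdisj fun b => measurable_snd (measurableSet_singleton b)]
  simp only [restrict_snd_preimage_singleton]

end MeasureTheory.Measure

namespace ProbabilityTheory

open Measure

variable {α β : Type*} [MeasurableSpace α] [MeasurableSpace β] [MeasurableSingletonClass β]

theorem measurable_prod_dirac_snd [Countable β] (κ : β → Kernel α α)
    [∀ b, IsSFiniteKernel (κ b)] :
    Measurable fun q : α × β => (κ q.2 q.1).prod (dirac q.2) := by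
  refine measurable_from_prod_countable_left fun b => ?_
  simp only [prod_dirac]
  exact (measurable_map _ (by fun_prop)).comp (κ b).measurable

theorem bind_prod_dirac_of_fiberMarginal_invariant [Countable β] (μ : Measure (α × β))
    (κ : β → Kernel α α) [∀ b, IsSFiniteKernel (κ b)]
    (hinv : ∀ b, (μ.fiberMarginal b).bind (κ b) = μ.fiberMarginal b) :
    μ.bind (fun q => (κ q.2 q.1).prod (dirac q.2)) = μ := by
  have hT := measurable_prod_dirac_snd κ
  have hpiece : ∀ b, ((μ.fiberMarginal b).map (fun a => (a, b))).bind
      (fun q => (κ q.2 q.1).prod (dirac q.2)) = (μ.fiberMarginal b).map (fun a => (a, b)) := by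
    intro b
    rw [Measure.bind_map (by fun_prop) hT, Function.comp_def]
    simp only [prod_dirac]
    rw [← Measure.map_bind (κ b).measurable (by fun_prop), hinv]
  conv_lhs => rw [eq_sum_map_fiberMarginal μ]
  rw [bind_sum _ _ hT.aemeasurable]
  simp only [hpiece]
  exact (eq_sum_map_fiberMarginal μ).symm

end ProbabilityTheory

theorem deepR_parameter_update_operator_invariance_general
    {Θ 𝒳 : Type*} [MeasurableSpace Θ] [MeasurableSpace 𝒳] [MeasurableSingletonClass 𝒳]
    [Fintype 𝒳]
    (C : Θ → 𝒳 → Prop)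
    (π : Measure Θ) [IsFiniteMeasure π]
    (L : 𝒳 → ℝ≥0∞) (hL : ∀ c, L c = π {θ | C θ c}) (hLpos : ∀ c, 0 < L c)
    (ν : 𝒳 → Measure Θ) (hν : ∀ c, ν c = (L c)⁻¹ • π.restrict {θ | C θ c})
    (κ : 𝒳 → Kernel Θ Θ) [∀ c, IsMarkovKernel (κ c)]
    (hinv : ∀ c, (ν c).bind (κ c) = ν c)
    (pstar : Measure (Θ × 𝒳))
    (hpstar : ∀ (A : Set Θ) (c : 𝒳), MeasurableSet A →
        pstar (A ×ˢ ({c} : Set 𝒳)) = π (A ∩ {θ | C θ c}) / ∑ c', L c')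
    (T₁ : Θ × 𝒳 → Measure (Θ × 𝒳))
    (hT₁ : ∀ q : Θ × 𝒳, T₁ q = (κ q.2 q.1).prod (Measure.dirac q.2)) :
    pstar.bind T₁ = pstar := by
  have hrestrict : ∀ c, π.restrict {θ | C θ c} = L c • ν c := fun c => by
    rw [hν, smul_smul, ENNReal.mul_inv_cancel (hLpos c).ne' (hL c ▸ measure_ne_top π _),
      one_smul]
  have hfiber : ∀ c, pstar.fiberMarginal c = (∑ c', L c')⁻¹ • L c • ν c := fun c => by
    ext B hB
    rw [Measure.fiberMarginal, Measure.map_apply measurable_fst hB,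
      Measure.restrict_apply (measurable_fst hB), ← Set.prod_eq, hpstar B c hB, ← hrestrict,
      Measure.smul_apply, Measure.restrict_apply hB, smul_eq_mul, div_eq_mul_inv, mul_comm]
  rw [funext hT₁]
  refine bind_prod_dirac_of_fiberMarginal_invariant pstar κ fun c => ?_
  rw [hfiber, Measure.bind_smul, Measure.bind_smul, hinv]

/-- **Invariance of the joint stationary distribution under the parameter-update
operator.**  `Θ` is the parameter space, `𝒳` the finite nonempty set of connectivity
constraints, `C θ c` the compatibility predicate, `π` the (unnormalized tempered
posterior) finite measure with `L c = π {θ | C θ c} > 0`, `ν c` the conditioned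
posterior `(L c)⁻¹ • π.restrict {θ | C θ c}`, and `κ c` a Markov kernel leaving
`ν c` invariant.  The joint measure `pstar`, characterized on rectangles by
`pstar (A ×ˢ {c}) = π (A ∩ {θ | C θ c}) / ∑ c', L c'`, is invariant under the
parameter-update kernel `T₁ (θ', c') = (κ c' θ') ⊗ δ_{c'}`. -/
theorem deepR_parameter_update_operator_invariance
    {Θ 𝒳 : Type*} [MeasurableSpace Θ] [MeasurableSpace 𝒳] [MeasurableSingletonClass 𝒳]
    [Fintype 𝒳] [Nonempty 𝒳]
    (C : Θ → 𝒳 → Prop)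
    (hCmeas : ∀ c, MeasurableSet {θ | C θ c})
    (π : Measure Θ) [IsFiniteMeasure π]
    (L : 𝒳 → ℝ≥0∞) (hL : ∀ c, L c = π {θ | C θ c}) (hLpos : ∀ c, 0 < L c)
    (ν : 𝒳 → Measure Θ) (hν : ∀ c, ν c = (L c)⁻¹ • π.restrict {θ | C θ c})
    (κ : 𝒳 → Kernel Θ Θ) [∀ c, IsMarkovKernel (κ c)]
    (hinv : ∀ c, (ν c).bind (κ c) = ν c)
    (pstar : Measure (Θ × 𝒳)) [IsProbabilityMeasure pstar]
    (hpstar : ∀ (A : Set Θ) (c : 𝒳), MeasurableSet A →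
        pstar (A ×ˢ ({c} : Set 𝒳)) = π (A ∩ {θ | C θ c}) / ∑ c', L c')
    (T₁ : Θ × 𝒳 → Measure (Θ × 𝒳))
    (hT₁ : ∀ q : Θ × 𝒳, T₁ q = (κ q.2 q.1).prod (Measure.dirac q.2)) :
    pstar.bind T₁ = pstar :=
  deepR_parameter_update_operator_invariance_general C π L hL hLpos ν hν κ hinv pstar hpstar T₁ hT₁
end
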